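/- arXiv:1311.2019 — 2 statements merged into one kernel-verified Lean document; each statement's English description precedes it below -/
import Mathlib

section
/- For every positive integer a, the lattice graph 4D-BCC(a), generated by the 4×4 matrix with rows (2a,0,0,a),(0,2a,0,a),(0,0,2a,a),(0,0,0,a), is linearly symmetric, and its projection over e₄ is isomorphic to the three-dimensional torus T(2a,2a,2a) (the primitive cubic lattice graph PC(2a)). -/
open Matrix

/-- The subgroup (submodule) `Mℤⁿ` generated by the columns of `M`. -/
def colSpan {ι : Type*} [Fintype ι] [DecidableEq ι] (M : Matrix ι ι ℤ) :
    Submodule ℤ (ι → ℤ) :=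
  LinearMap.range M.mulVecLin

/-- The vertex set `ℤⁿ/Mℤⁿ` of the lattice graph. -/
abbrev LatticeVertex {ι : Type*} [Fintype ι] [DecidableEq ι] (M : Matrix ι ι ℤ) :=
  (ι → ℤ) ⧸ colSpan M

/-- The `i`-th standard basis vector of `ℤⁿ`. -/
def stdBasis {ι : Type*} [DecidableEq ι] (i : ι) : ι → ℤ := Pi.single i 1

/-- The lattice graph `𝒢(M)`. -/
def latticeGraph {ι : Type*} [Fintype ι] [DecidableEq ι] (M : Matrix ι ι ℤ) :
    SimpleGraph (LatticeVertex M) where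
  Adj v w := v ≠ w ∧ ∃ i : ι,
      v - w = Submodule.Quotient.mk (stdBasis i) ∨
      w - v = Submodule.Quotient.mk (stdBasis i)
  symm := ⟨by rintro v w ⟨hne, i, h⟩; exact ⟨hne.symm, i, h.symm⟩⟩
  loopless := ⟨fun v h => h.1 rfl⟩

/-- The subgraph of `𝒢(M)` spanned by the directions in `S`. -/
def spannedSubgraph {ι : Type*} [Fintype ι] [DecidableEq ι] (M : Matrix ι ι ℤ) (S : Set ι) :
    SimpleGraph (AddSubgroup.closure
      ((fun i => (Submodule.Quotient.mk (stdBasis i) : LatticeVertex M)) '' S)) where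
  Adj v w := v ≠ w ∧ ∃ i ∈ S,
      (v : LatticeVertex M) - (w : LatticeVertex M) = Submodule.Quotient.mk (stdBasis i) ∨
      (w : LatticeVertex M) - (v : LatticeVertex M) = Submodule.Quotient.mk (stdBasis i)
  symm := ⟨by rintro v w ⟨hne, i, hiS, h⟩; exact ⟨hne.symm, i, hiS, h.symm⟩⟩
  loopless := ⟨fun v h => h.1 rfl⟩

/-- The projection of `𝒢(M)` over `e_j`: the subgraph spanned by all other directions. -/
def projGraph {ι : Type*} [Fintype ι] [DecidableEq ι] (M : Matrix ι ι ℤ) (j : ι) :=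
  spannedSubgraph M {i | i ≠ j}

/-- The torus graph `T(a₁,…,aₙ)`. -/
def torusGraph {n : ℕ} (a : Fin n → ℕ) : SimpleGraph (∀ i, ZMod (a i)) where
  Adj x y := x ≠ y ∧ ∃ i, (∀ j, j ≠ i → x j = y j) ∧ (x i = y i + 1 ∨ y i = x i + 1)
  symm := ⟨by
    rintro x y ⟨hne, i, hj, h⟩
    exact ⟨hne.symm, i, fun j hji => (hj j hji).symm, h.symm⟩⟩
  loopless := ⟨fun x h => h.1 rfl⟩

/-- A signed permutation matrix: exactly one nonzero entry, equal to `±1`,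
in each row and each column. -/
def IsSignedPerm {n : ℕ} (P : Matrix (Fin n) (Fin n) ℤ) : Prop :=
  (∀ i j, P i j = 0 ∨ P i j = 1 ∨ P i j = -1) ∧
  (∀ i, ∃! j, P i j ≠ 0) ∧ (∀ j, ∃! i, P i j ≠ 0)

/-- `𝒢(M)` is linearly symmetric: for every `i` there is a signed permutation matrix
inducing an automorphism of `𝒢(M)` sending `e₁` to `±e_i`. -/
def IsLinearlySymmetric {n : ℕ} (M : Matrix (Fin n) (Fin n) ℤ) : Prop :=
  ∀ i : Fin n, ∃ P : Matrix (Fin n) (Fin n) ℤ, IsSignedPerm P ∧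
    (∃ Q : Matrix (Fin n) (Fin n) ℤ, P * M = M * Q) ∧
    (P.mulVec (stdBasis (⟨0, i.pos⟩ : Fin n)) = stdBasis i ∨
      P.mulVec (stdBasis (⟨0, i.pos⟩ : Fin n)) = -stdBasis i)

/-!
Transposing `e₁` with `e₂` or `e₃` commutes with the matrix `M`, and transposing `e₁` with `e₄`
satisfies `PM = MQ` for the integral matrix `Q = M⁻¹PM`; so `M` is linearly symmetric.

For the projection, `v ↦ (v₁ - v₄, v₂ - v₄, v₃ - v₄) mod 2a` kills the columns of `M`, hence
descends to `ℤ⁴/Mℤ⁴`. On the subgroup generated by `e₁, e₂, e₃` (whose elements have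
representatives with `v₄ = 0`) it is injective and sends `e_k` to the `k`-th unit vector, so it is
a group isomorphism onto `(ℤ/2a)³` carrying the generators `±e_k` of the projection to the
generators of the torus.
-/

section LinearSymmetry

variable {n : ℕ}

lemma permMatrix_ne_zero_iff {ι R : Type*} [DecidableEq ι] [Zero R] [One R] [NeZero (1 : R)]
    (σ : Equiv.Perm ι) (i j : ι) : σ.permMatrix R i j ≠ 0 ↔ σ i = j := by
  simp

lemma isSignedPerm_permMatrix (σ : Equiv.Perm (Fin n)) : IsSignedPerm (σ.permMatrix ℤ) := by
  refine ⟨fun i j => ?_, fun i => ?_, fun j => ?_⟩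
  · by_cases h : σ i = j <;> simp [h]
  · simpa only [permMatrix_ne_zero_iff] using existsUnique_eq'
  · simpa only [permMatrix_ne_zero_iff, ← Equiv.eq_symm_apply] using existsUnique_eq

lemma swap_mulVec_stdBasis (i j : Fin n) : swap ℤ i j *ᵥ stdBasis i = stdBasis j := by
  rw [swap_mulVec]
  funext k
  simp [_root_.stdBasis, Pi.single_apply, Equiv.swap_apply_eq_iff]

theorem isLinearlySymmetric_of_swap {M : Matrix (Fin n) (Fin n) ℤ}
    (h : ∀ i : Fin n, ∃ Q, swap ℤ ⟨0, i.pos⟩ i * M = M * Q) : IsLinearlySymmetric M :=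
  fun i => ⟨swap ℤ ⟨0, i.pos⟩ i, isSignedPerm_permMatrix _, h i,
    .inl (swap_mulVec_stdBasis _ _)⟩

end LinearSymmetry

section Torus

variable {n : ℕ}

lemma sub_eq_single_iff {G : Fin n → Type*} [∀ i, AddCommGroup (G i)] (x y : ∀ i, G i)
    (i : Fin n) (c : G i) : x - y = Pi.single i c ↔ (∀ j, j ≠ i → x j = y j) ∧ x i = y i + c := by
  simp only [funext_iff, sub_eq_iff_eq_add']
  refine ⟨fun h => ⟨fun j hj => by simpa [hj] using h j, by simpa using h i⟩, ?_⟩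
  rintro ⟨hne, heq⟩ j
  by_cases hj : j = i
  · subst hj; simpa using heq
  · simpa [hj] using hne j hj

lemma torusGraph_adj_iff (a : Fin n → ℕ) (x y : ∀ i, ZMod (a i)) :
    (torusGraph a).Adj x y ↔ x ≠ y ∧ ∃ i, x - y = Pi.single i 1 ∨ y - x = Pi.single i 1 := by
  simp only [torusGraph, sub_eq_single_iff]
  constructor
  · rintro ⟨hne, i, hj, h⟩
    exact ⟨hne, i, h.imp (⟨hj, ·⟩) (⟨fun j hji => (hj j hji).symm, ·⟩)⟩
  · rintro ⟨hne, i, ⟨hj, h⟩ | ⟨hj, h⟩⟩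
    · exact ⟨hne, i, hj, .inl h⟩
    · exact ⟨hne, i, fun j hji => (hj j hji).symm, .inr h⟩

end Torus

section Spanned

variable {ι : Type*} [Fintype ι] [DecidableEq ι] (M : Matrix ι ι ℤ) (S : Set ι)

abbrev spannedSubgroup : AddSubgroup (LatticeVertex M) :=
  AddSubgroup.closure
    ((fun i => (Submodule.Quotient.mk (_root_.stdBasis i) : LatticeVertex M)) '' S)

variable {M S}

lemma exists_rep_of_mem_spannedSubgroup {v : LatticeVertex M} (hv : v ∈ spannedSubgroup M S) :
    ∃ u : ι → ℤ, (∀ j ∉ S, u j = 0) ∧ Submodule.Quotient.mk u = v := by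
  have hle : spannedSubgroup M S ≤
      (AddSubgroup.pi Sᶜ fun _ => ⊥).map (colSpan M).mkQ.toAddMonoidHom := by
    rw [AddSubgroup.closure_le]
    rintro _ ⟨i, hi, rfl⟩
    refine ⟨_root_.stdBasis i, fun j hj => ?_, rfl⟩
    simp [_root_.stdBasis, show j ≠ i from fun h => hj (h ▸ hi)]
  obtain ⟨u, hu, rfl⟩ := hle hv
  exact ⟨u, fun j hj => by simpa using hu j hj, rfl⟩

theorem nonempty_spannedSubgraph_iso_torusGraph {n : ℕ} {a : Fin n → ℕ}
    (f : LatticeVertex M →+ ∀ k, ZMod (a k))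
    (hf : ∀ v ∈ spannedSubgroup M S, f v = 0 → v = 0)
    (σ : Fin n → ι) (hσ : Set.range σ = S)
    (hfσ : ∀ k, f (Submodule.Quotient.mk (_root_.stdBasis (σ k))) = Pi.single k 1) :
    Nonempty (spannedSubgraph M S ≃g torusGraph a) := by
  subst hσ
  have hgen (k : Fin n) :
      (Submodule.Quotient.mk (_root_.stdBasis (σ k)) : LatticeVertex M) ∈
        spannedSubgroup M (Set.range σ) :=
    AddSubgroup.subset_closure ⟨σ k, ⟨k, rfl⟩, rfl⟩
  have hcancel {v w} (hv : v ∈ spannedSubgroup M (Set.range σ))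
      (hw : w ∈ spannedSubgroup M (Set.range σ)) (h : f v = f w) : v = w :=
    sub_eq_zero.1 (hf _ (sub_mem hv hw) (by rw [map_sub, h, sub_self]))
  have hinj : Function.Injective fun v : spannedSubgroup M (Set.range σ) => f v :=
    fun v w h => Subtype.ext (hcancel v.2 w.2 h)
  have hsurj (x : ∀ k, ZMod (a k)) : ∃ v : spannedSubgroup M (Set.range σ), f v = x := by
    choose m hm using fun k => ZMod.intCast_surjective (x k)
    refine ⟨⟨∑ k, m k • Submodule.Quotient.mk (_root_.stdBasis (σ k)),
      sum_mem fun k _ => zsmul_mem (hgen k) _⟩, ?_⟩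
    calc f (∑ k, m k • Submodule.Quotient.mk (_root_.stdBasis (σ k)))
        = ∑ k, m k • Pi.single k (1 : ZMod (a k)) := by simp only [map_sum, map_zsmul, hfσ]
      _ = ∑ k, Pi.single k (x k) := by simp only [← Pi.single_smul, zsmul_one, hm]
      _ = x := Finset.univ_sum_single x
  have hstep (v w : spannedSubgroup M (Set.range σ)) (k : Fin n) :
      (v : LatticeVertex M) - (w : LatticeVertex M) =
          Submodule.Quotient.mk (_root_.stdBasis (σ k)) ↔ f v - f w = Pi.single k 1 := by
    rw [← hfσ, ← map_sub]
    exact ⟨congrArg f, hcancel (sub_mem v.2 w.2) (hgen k)⟩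
  refine ⟨⟨Equiv.ofBijective _ ⟨hinj, hsurj⟩, fun {v w} => ?_⟩⟩
  change (torusGraph a).Adj (f v) (f w) ↔ (spannedSubgraph M _).Adj v w
  simp only [torusGraph_adj_iff, spannedSubgraph, Set.exists_range_iff, hstep, hinj.ne_iff]

end Spanned

section BCC

def bccMatrix (a : ℤ) : Matrix (Fin 4) (Fin 4) ℤ :=
  !![2 * a, 0, 0, a; 0, 2 * a, 0, a; 0, 0, 2 * a, a; 0, 0, 0, a]

lemma swap_mul_bccMatrix_comm (a : ℤ) {i : Fin 4} (hi : i ≠ 3) :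
    swap ℤ 0 i * bccMatrix a = bccMatrix a * swap ℤ 0 i := by
  ext j k
  fin_cases i <;> fin_cases j <;> fin_cases k <;>
    simp_all [bccMatrix, swap, Matrix.mul_apply, Fin.sum_univ_four, Equiv.swap_apply_def]

lemma swap_zero_three_mul_bccMatrix (a : ℤ) :
    swap ℤ 0 3 * bccMatrix a =
      bccMatrix a * !![-1, 0, 0, 0; -1, 1, 0, 0; -1, 0, 1, 0; 2, 0, 0, 1] := by
  ext j k
  fin_cases j <;> fin_cases k <;>
    simp [bccMatrix, swap, Matrix.mul_apply, Fin.sum_univ_four, Equiv.swap_apply_def] <;> ring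

theorem isLinearlySymmetric_bccMatrix (a : ℤ) : IsLinearlySymmetric (bccMatrix a) := by
  refine isLinearlySymmetric_of_swap fun i => ?_
  by_cases hi : i = 3
  · subst hi
    exact ⟨_, swap_zero_three_mul_bccMatrix a⟩
  · exact ⟨_, swap_mul_bccMatrix_comm a hi⟩

def bccDiff (a : ℕ) : (Fin 4 → ℤ) →ₗ[ℤ] (Fin 3 → ZMod (2 * a)) where
  toFun v k := ((v k.castSucc - v 3 : ℤ) : ZMod (2 * a))
  map_add' v w := by funext k; push_cast [Pi.add_apply]; ring
  map_smul' c v := by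
    funext k
    simp only [Pi.smul_apply, smul_eq_mul, RingHom.id_apply]
    push_cast
    ring

lemma colSpan_bccMatrix_le_ker_bccDiff (a : ℕ) :
    colSpan (bccMatrix a) ≤ LinearMap.ker (bccDiff a) := by
  rintro _ ⟨t, rfl⟩
  funext k
  have hk : (bccMatrix a *ᵥ t) k.castSucc - (bccMatrix a *ᵥ t) 3 = 2 * a * t k.castSucc := by
    fin_cases k <;> simp [bccMatrix, mulVec, dotProduct, Fin.sum_univ_four]
  show (((bccMatrix a *ᵥ t) k.castSucc - (bccMatrix a *ᵥ t) 3 : ℤ) : ZMod (2 * a)) = 0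
  rw [hk, (ZMod.intCast_zmod_eq_zero_iff_dvd _ _).2 ⟨t k.castSucc, by push_cast; ring⟩]

def bccProj (a : ℕ) : LatticeVertex (bccMatrix a) →ₗ[ℤ] (Fin 3 → ZMod (2 * a)) :=
  (colSpan _).liftQ (bccDiff a) (colSpan_bccMatrix_le_ker_bccDiff a)

lemma bccProj_mk (a : ℕ) (v : Fin 4 → ℤ) :
    bccProj a (Submodule.Quotient.mk v) = fun k => ((v k.castSucc - v 3 : ℤ) : ZMod (2 * a)) :=
  rfl

lemma bccProj_mk_stdBasis (a : ℕ) (k : Fin 3) :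
    bccProj a (Submodule.Quotient.mk (_root_.stdBasis k.castSucc)) = Pi.single k 1 := by
  rw [bccProj_mk]
  funext j
  fin_cases k <;> fin_cases j <;> simp [_root_.stdBasis]

lemma bccProj_eq_zero (a : ℕ) {v : LatticeVertex (bccMatrix a)}
    (hv : v ∈ spannedSubgroup (bccMatrix a) {i | i ≠ 3}) (h0 : bccProj a v = 0) : v = 0 := by
  obtain ⟨u, hu, rfl⟩ := exists_rep_of_mem_spannedSubgroup hv
  have hu3 : u 3 = 0 := hu 3 (by simp)
  have hdvd (k : Fin 3) : ∃ t, u k.castSucc = (2 * a : ℕ) * t := by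
    have hk : (u k.castSucc : ZMod (2 * a)) = 0 := by
      simpa [bccProj_mk, hu3] using congrFun h0 k
    exact (ZMod.intCast_zmod_eq_zero_iff_dvd _ _).1 hk
  choose t ht using hdvd
  rw [Submodule.Quotient.mk_eq_zero]
  refine ⟨![t 0, t 1, t 2, 0], ?_⟩
  ext j
  fin_cases j <;> simp [bccMatrix, mulVec, dotProduct, Fin.sum_univ_four, hu3,
    show u 0 = _ from ht 0, show u 1 = _ from ht 1, show u 2 = _ from ht 2]

theorem nonempty_projGraph_bccMatrix_iso_torusGraph (a : ℕ) :
    Nonempty (projGraph (bccMatrix a) 3 ≃g torusGraph fun _ : Fin 3 => 2 * a) :=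
  nonempty_spannedSubgraph_iso_torusGraph (bccProj a).toAddMonoidHom
    (fun _ hv => bccProj_eq_zero a hv) Fin.castSucc (Set.ext fun _ => Fin.exists_castSucc_eq)
    (bccProj_mk_stdBasis a)

end BCC

theorem fourD_BCC_symmetric_and_projection_general (a : ℕ) :
    IsLinearlySymmetric
      !![(2 * a : ℤ), 0, 0, a; 0, 2 * a, 0, a; 0, 0, 2 * a, a; 0, 0, 0, a] ∧
    Nonempty (projGraph
      !![(2 * a : ℤ), 0, 0, a; 0, 2 * a, 0, a; 0, 0, 2 * a, a; 0, 0, 0, a] (3 : Fin 4) ≃g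
      torusGraph ![2 * a, 2 * a, 2 * a]) := by
  have hdims : ![2 * a, 2 * a, 2 * a] = fun _ : Fin 3 => 2 * a := by
    funext k; fin_cases k <;> rfl
  rw [hdims]
  exact ⟨isLinearlySymmetric_bccMatrix a, nonempty_projGraph_bccMatrix_iso_torusGraph a⟩

/-- `4D-BCC(a)` is linearly symmetric and its projection over `e₄` is the
three-dimensional torus `T(2a,2a,2a)`, i.e. `PC(2a)`. -/
theorem fourD_BCC_symmetric_and_projection (a : ℕ) (ha : 0 < a) :
    IsLinearlySymmetric
      !![(2 * a : ℤ), 0, 0, a; 0, 2 * a, 0, a; 0, 0, 2 * a, a; 0, 0, 0, a] ∧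
    Nonempty (projGraph
      !![(2 * a : ℤ), 0, 0, a; 0, 2 * a, 0, a; 0, 0, 2 * a, a; 0, 0, 0, a] (3 : Fin 4) ≃g
      torusGraph ![2 * a, 2 * a, 2 * a]) :=
  fourD_BCC_symmetric_and_projection_general a
end

section
/- Let M ∈ ℤ^{n×n} be nonsingular. If the lattice graph 𝒢(M) is linearly symmetric, then 𝒢(M) is symmetric, i.e., it is both vertex-transitive and edge-transitive. -/
open Matrix

/-!
`𝒢(M)` is the Cayley graph of `ℤⁿ/Mℤⁿ` with connection set `{±[e_i]}`. Translations therefore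
act transitively on vertices, and every group automorphism of `ℤⁿ/Mℤⁿ` permuting the connection
set is a graph automorphism; both `x ↦ -x` and `x ↦ Px`, for a signed permutation matrix `P`
with `PM = MQ`, are such automorphisms. An edge `{x₁, x₂}` is the translate of `{0, x₁ - x₂}`
with `x₁ - x₂ = ±[e_i]`, and linear symmetry provides a `P` carrying `[e₁]` to `±[e_i]`, so every
edge is carried to `{0, [e₁]}`.
-/

section LatticeGraph

variable {ι : Type*} [Fintype ι] [DecidableEq ι] {M : Matrix ι ι ℤ}

variable (M) in
def unitSteps : Set (LatticeVertex M) :=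
  {v | ∃ i, v = Submodule.Quotient.mk (_root_.stdBasis i) ∨
    -v = Submodule.Quotient.mk (_root_.stdBasis i)}

lemma neg_mem_unitSteps {v : LatticeVertex M} (hv : v ∈ unitSteps M) : -v ∈ unitSteps M := by
  obtain ⟨i, hi⟩ := hv
  exact ⟨i, by rwa [neg_neg, or_comm]⟩

lemma latticeGraph_adj_iff {v w : LatticeVertex M} :
    (latticeGraph M).Adj v w ↔ v ≠ w ∧ v - w ∈ unitSteps M := by
  simp only [latticeGraph, unitSteps, Set.mem_ofPred_eq, neg_sub]

variable (M) in
def latticeGraphAddRight (a : LatticeVertex M) : latticeGraph M ≃g latticeGraph M where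
  toEquiv := Equiv.addRight a
  map_rel_iff' := by
    simp only [Equiv.coe_addRight, latticeGraph_adj_iff, add_sub_add_right_eq_sub, ne_eq,
      add_left_inj, implies_true]

@[simp]
lemma latticeGraphAddRight_apply (a v : LatticeVertex M) : latticeGraphAddRight M a v = v + a :=
  rfl

def latticeGraphIsoOfAddEquiv (g : LatticeVertex M ≃+ LatticeVertex M)
    (hg : ∀ v ∈ unitSteps M, g v ∈ unitSteps M)
    (hg_symm : ∀ v ∈ unitSteps M, g.symm v ∈ unitSteps M) :
    latticeGraph M ≃g latticeGraph M where
  toEquiv := g.toEquiv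
  map_rel_iff' {v w} := by
    simp only [AddEquiv.toEquiv_eq_coe, EquivLike.coe_coe, latticeGraph_adj_iff, ne_eq,
      EmbeddingLike.apply_eq_iff_eq, ← map_sub]
    refine and_congr_right fun _ => ⟨fun h => ?_, hg _⟩
    simpa using hg_symm _ h

end LatticeGraph

namespace IsSignedPerm

variable {n : ℕ} {P : Matrix (Fin n) (Fin n) ℤ}

lemma transpose (hP : IsSignedPerm P) : IsSignedPerm Pᵀ :=
  ⟨fun i j => hP.1 j i, hP.2.2, hP.2.1⟩

lemma mul_transpose_self (hP : IsSignedPerm P) : P * Pᵀ = 1 := by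
  ext i k
  rw [mul_apply, one_apply]
  simp only [transpose_apply]
  obtain ⟨j, hj, hj_unique⟩ := hP.2.1 i
  rw [Finset.sum_eq_single j (fun j' _ hj' => ?_) (by simp)]
  · split_ifs with hik
    · subst hik
      rcases hP.1 i j with h | h | h <;> simp_all
    · have : P k j = 0 := by
        by_contra hk
        exact hik ((hP.2.2 j).unique hj hk)
      rw [this, mul_zero]
  · have : P i j' = 0 := by
      by_contra h
      exact hj' (hj_unique j' h)
    rw [this, zero_mul]

lemma mulVec_stdBasis (hP : IsSignedPerm P) (j : Fin n) :
    ∃ i, P *ᵥ _root_.stdBasis j = _root_.stdBasis i ∨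
      -(P *ᵥ _root_.stdBasis j) = _root_.stdBasis i := by
  obtain ⟨i, hi, hi_unique⟩ := hP.2.2 j
  have hcol : P *ᵥ _root_.stdBasis j = Pi.single i (P i j) := by
    ext k
    rw [_root_.stdBasis, mulVec_single_one, col_apply]
    by_cases hk : k = i
    · rw [hk, Pi.single_eq_same]
    · rw [Pi.single_eq_of_ne hk]
      by_contra h
      exact hk (hi_unique k h)
  refine ⟨i, ?_⟩
  rcases hP.1 i j with h | h | h
  · exact absurd h hi
  · left
    rw [hcol, h, _root_.stdBasis]
  · right
    rw [hcol, h, Pi.single_neg, neg_neg, _root_.stdBasis]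

end IsSignedPerm

section QuotientEquiv

variable {ι : Type*} [Fintype ι] [DecidableEq ι]

lemma map_colSpan (P M : Matrix ι ι ℤ) : (colSpan M).map P.mulVecLin = colSpan (P * M) := by
  rw [colSpan, colSpan, mulVecLin_mul, LinearMap.range_comp]

lemma colSpan_mul_of_isUnit {M Q : Matrix ι ι ℤ} (hQ : IsUnit Q) :
    colSpan (M * Q) = colSpan M := by
  rw [colSpan, colSpan, mulVecLin_mul, LinearMap.range_comp,
    LinearMap.range_eq_top.2 (mulVec_surjective_iff_isUnit.2 hQ), Submodule.map_top]

lemma isUnit_of_mul_eq_mul {P M Q : Matrix ι ι ℤ} (hM : M.det ≠ 0) (hP : IsUnit P)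
    (h : P * M = M * Q) : IsUnit Q := by
  rw [isUnit_iff_isUnit_det] at hP ⊢
  have : M.det * Q.det = M.det * P.det := by rw [← det_mul, ← h, det_mul, mul_comm]
  rwa [mul_left_cancel₀ hM this]

/-- `x ↦ Px` on `ℤⁿ/Mℤⁿ`: `P(Mℤⁿ) = MQℤⁿ = Mℤⁿ` because `det Q = det P` is a unit. -/
noncomputable def mulVecQuotEquiv {P M Q : Matrix ι ι ℤ} [Invertible P] (hM : M.det ≠ 0)
    (h : P * M = M * Q) : LatticeVertex M ≃ₗ[ℤ] LatticeVertex M :=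
  Submodule.Quotient.equiv _ _ (P.toLinearEquiv' ‹_›) <| by
    change (colSpan M).map P.mulVecLin = _
    rw [map_colSpan, h,
      colSpan_mul_of_isUnit (isUnit_of_mul_eq_mul hM (isUnit_of_invertible P) h)]

variable {P M Q : Matrix ι ι ℤ} [Invertible P] (hM : M.det ≠ 0) (h : P * M = M * Q)

lemma mulVecQuotEquiv_mk (x : ι → ℤ) :
    mulVecQuotEquiv hM h (Submodule.Quotient.mk x) = Submodule.Quotient.mk (P *ᵥ x) :=
  rfl

lemma mulVecQuotEquiv_symm_mk (x : ι → ℤ) :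
    (mulVecQuotEquiv hM h).symm (Submodule.Quotient.mk x) =
      Submodule.Quotient.mk (⅟P *ᵥ x) := by
  rw [LinearEquiv.symm_apply_eq, mulVecQuotEquiv_mk, mulVec_mulVec, mul_invOf_self, one_mulVec]

end QuotientEquiv

section Automorphisms

variable {n : ℕ} {M P Q : Matrix (Fin n) (Fin n) ℤ}

lemma map_mem_unitSteps_of_isSignedPerm (hP : IsSignedPerm P)
    (g : LatticeVertex M ≃+ LatticeVertex M)
    (hg : ∀ x, g (Submodule.Quotient.mk x) = Submodule.Quotient.mk (P *ᵥ x))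
    {v : LatticeVertex M} (hv : v ∈ unitSteps M) : g v ∈ unitSteps M := by
  have hbasis : ∀ j, g (Submodule.Quotient.mk (_root_.stdBasis j)) ∈ unitSteps M := fun j => by
    obtain ⟨i, hi⟩ := hP.mulVec_stdBasis j
    refine ⟨i, ?_⟩
    rw [hg, ← Submodule.Quotient.mk_neg]
    exact hi.imp (congrArg _) (congrArg _)
  obtain ⟨j, rfl | hj⟩ := hv
  · exact hbasis j
  · rw [← neg_neg v, hj, map_neg]
    exact neg_mem_unitSteps (hbasis j)

noncomputable def signedPermIso (hM : M.det ≠ 0) (hP : IsSignedPerm P) (h : P * M = M * Q) :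
    latticeGraph M ≃g latticeGraph M :=
  letI : Invertible P := invertibleOfRightInverse P Pᵀ hP.mul_transpose_self
  latticeGraphIsoOfAddEquiv (mulVecQuotEquiv hM h).toAddEquiv
    (fun _ => map_mem_unitSteps_of_isSignedPerm hP _ (mulVecQuotEquiv_mk hM h))
    (fun _ => map_mem_unitSteps_of_isSignedPerm hP.transpose _ (mulVecQuotEquiv_symm_mk hM h))

lemma signedPermIso_mk (hM : M.det ≠ 0) (hP : IsSignedPerm P) (h : P * M = M * Q)
    (x : Fin n → ℤ) :
    signedPermIso hM hP h (Submodule.Quotient.mk x) = Submodule.Quotient.mk (P *ᵥ x) :=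
  rfl

variable (M) in
noncomputable def latticeGraphNeg : latticeGraph M ≃g latticeGraph M :=
  latticeGraphIsoOfAddEquiv (AddEquiv.neg _) (fun _ => neg_mem_unitSteps)
    (fun _ => neg_mem_unitSteps)

@[simp]
lemma latticeGraphNeg_apply (v : LatticeVertex M) : latticeGraphNeg M v = -v :=
  rfl

lemma exists_iso_map_zero_and_stdBasis_zero (hM : M.det ≠ 0) (hsym : IsLinearlySymmetric M)
    (hn : 0 < n) {d : LatticeVertex M} (hd : d ∈ unitSteps M) :
    ∃ ψ : latticeGraph M ≃g latticeGraph M,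
      ψ 0 = 0 ∧ ψ (Submodule.Quotient.mk (_root_.stdBasis ⟨0, hn⟩)) = d := by
  obtain ⟨i, hi⟩ := hd
  obtain ⟨P, hP, ⟨Q, h⟩, hPe⟩ := hsym i
  have h0 : signedPermIso hM hP h 0 = 0 := by
    simpa using signedPermIso_mk hM hP h 0
  have he : signedPermIso hM hP h (Submodule.Quotient.mk (_root_.stdBasis ⟨0, hn⟩)) = d ∨
      signedPermIso hM hP h (Submodule.Quotient.mk (_root_.stdBasis ⟨0, hn⟩)) = -d := by
    rw [signedPermIso_mk]
    rcases hPe with hPe | hPe <;> rcases hi with hd | hd <;> simp [hPe, ← hd]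
  rcases he with he | he
  · exact ⟨signedPermIso hM hP h, h0, he⟩
  · refine ⟨(signedPermIso hM hP h).trans (latticeGraphNeg M), ?_, ?_⟩
    · simp [h0]
    · simp [he]

lemma exists_iso_of_adj (hM : M.det ≠ 0) (hsym : IsLinearlySymmetric M)
    {x₁ x₂ y₁ y₂ : LatticeVertex M} (hx : (latticeGraph M).Adj x₁ x₂)
    (hy : (latticeGraph M).Adj y₁ y₂) :
    ∃ φ : latticeGraph M ≃g latticeGraph M, φ x₁ = y₁ ∧ φ x₂ = y₂ := by
  have hn : 0 < n := by
    obtain ⟨-, i, -⟩ := hx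
    exact i.pos
  obtain ⟨φ, hφ₀, hφ⟩ :=
    exists_iso_map_zero_and_stdBasis_zero hM hsym hn (latticeGraph_adj_iff.1 hx).2
  obtain ⟨ψ, hψ₀, hψ⟩ :=
    exists_iso_map_zero_and_stdBasis_zero hM hsym hn (latticeGraph_adj_iff.1 hy).2
  refine ⟨(latticeGraphAddRight M (-x₂)).trans
    (φ.symm.trans (ψ.trans (latticeGraphAddRight M y₂))), ?_, ?_⟩
  · simp [← sub_eq_add_neg, ← hφ, hψ]
  · have hφ₀' : φ.symm 0 = 0 := by rw [RelIso.symm_apply_eq, hφ₀]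
    simp [hφ₀', hψ₀]

end Automorphisms

/-- a linearly symmetric lattice graph is symmetric, i.e. both
vertex-transitive and edge-transitive. -/
theorem linearlySymmetric_implies_symmetric {n : ℕ}
    (M : Matrix (Fin n) (Fin n) ℤ) (hM : M.det ≠ 0) (hsym : IsLinearlySymmetric M) :
    (∀ x y : LatticeVertex M, ∃ φ : latticeGraph M ≃g latticeGraph M, φ x = y) ∧
    (∀ x₁ x₂ y₁ y₂ : LatticeVertex M,
      (latticeGraph M).Adj x₁ x₂ → (latticeGraph M).Adj y₁ y₂ →
      ∃ φ : latticeGraph M ≃g latticeGraph M,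
        (φ x₁ = y₁ ∧ φ x₂ = y₂) ∨ (φ x₁ = y₂ ∧ φ x₂ = y₁)) :=
  ⟨fun x y => ⟨latticeGraphAddRight M (y - x), add_sub_cancel x y⟩,
    fun _ _ _ _ hx hy => (exists_iso_of_adj hM hsym hx hy).imp fun _ => Or.inl⟩
end
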